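/- The inverse map to F: given a pair (ω_R, ω_B) of one-colored oriented configurations on the same multigraph G_N with ∂r(ω_R) = f+g and ∂b(ω_B) = −f+g, define a two-colored configuration ω̃ with orientations those of ω_R, coloring each edge blue if its orientations in ω_R and ω_B agree and red otherwise; then F(ω̃) = (ω_R, ω_B), and ω̃ has red source f and blue source g. -/

import Mathlib

open Finset

/-- A finite multigraph on vertex set `V`: a finite set of distinguishable
strands (edges), each with an unordered pair of distinct endpoints. -/
structure MG (V : Type) where
  Strand : Type
  [fin : Fintype Strand]
  [dec : DecidableEq Strand]
  ends : Strand → Sym2 V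
  noloop : ∀ s, ¬ (ends s).IsDiag

attribute [instance] MG.fin MG.dec

variable {V : Type} [Fintype V] [DecidableEq V]

/-- An oriented (one-colored) configuration on the multigraph `G`. -/
structure Config (G : MG V) where
  orient : G.Strand → V × V
  compat : ∀ s, Sym2.mk (orient s).1 (orient s).2 = G.ends s

/-- A two-colored oriented configuration on the multigraph `G`
(`red s = true` means the strand `s` is red, otherwise it is blue). -/
structure Config2 (G : MG V) where
  orient : G.Strand → V × V
  red : G.Strand → Bool
  compat : ∀ s, Sym2.mk (orient s).1 (orient s).2 = G.ends s

/-- The current induced by an oriented configuration. -/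
def Config.cur {G : MG V} (ω : Config G) (x y : V) : ℕ :=
  (univ.filter fun s => ω.orient s = (x, y)).card

/-- The red current of a two-colored configuration. -/
def Config2.redCur {G : MG V} (ω : Config2 G) (x y : V) : ℕ :=
  (univ.filter fun s => ω.orient s = (x, y) ∧ ω.red s = true).card

/-- The blue current of a two-colored configuration. -/
def Config2.blueCur {G : MG V} (ω : Config2 G) (x y : V) : ℕ :=
  (univ.filter fun s => ω.orient s = (x, y) ∧ ω.red s = false).card

/-- The source function of a current. -/
def csrc (n : V → V → ℕ) (x : V) : ℤ :=
  ∑ y, ((n x y : ℤ) - n y x)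

/-- The bijection `F`: paint everything red keeping orientations for the first
component; reverse red strands and paint everything blue for the second. -/
def F {G : MG V} (ω : Config2 G) : Config G × Config G :=
  (⟨ω.orient, ω.compat⟩,
   ⟨fun s => if ω.red s then (ω.orient s).swap else ω.orient s, by
      intro s
      by_cases h : ω.red s <;> simp [h, ← ω.compat s, Sym2.eq_swap]⟩)

/-- The inverse map to `F`: the orientation is that of the first component,
and a strand is colored blue exactly when its orientations in the two
components agree (red otherwise). -/
def Finv {G : MG V} (p : Config G × Config G) : Config2 G :=
  ⟨p.1.orient, fun s => decide (p.1.orient s ≠ p.2.orient s), p.1.compat⟩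

/-! Both components orient every strand along its edge, so `ω_B` either agrees with `ω_R` on a
strand or reverses it; this is exactly what the colouring of `ω̃` records, whence `F ω̃ = (ω_R, ω_B)`.
Splitting currents by colour, the current of `ω_R` is red plus blue, while that of `ω_B` is the
reversed red current plus the blue one. Hence `∂ω_R = ∂r + ∂b` and `∂ω_B = ∂b - ∂r`, and solving
this linear system gives `∂r = f` and `∂b = g`. -/

omit [Fintype V] [DecidableEq V] in
theorem Config.ext_of_orient {G : MG V} {ω ω' : Config G} (h : ω.orient = ω'.orient) :
    ω = ω' := by
  cases ω; cases ω'; cases h; rfl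

omit [Fintype V] [DecidableEq V] in
theorem Config.orient_eq_or_eq_swap {G : MG V} (ω ω' : Config G) (s : G.Strand) :
    ω'.orient s = ω.orient s ∨ ω'.orient s = (ω.orient s).swap :=
  Sym2.mk_eq_mk_iff.mp ((ω'.compat s).trans (ω.compat s).symm)

omit [Fintype V] in
theorem F_Finv {G : MG V} (p : Config G × Config G) : F (Finv p) = p := by
  refine Prod.ext (Config.ext_of_orient rfl) (Config.ext_of_orient (funext fun s => ?_))
  change (if decide (p.1.orient s ≠ p.2.orient s) then (p.1.orient s).swap else p.1.orient s) = _
  rcases p.1.orient_eq_or_eq_swap p.2 s with h | h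
  · simp [h]
  · by_cases same : p.1.orient s = p.2.orient s
    · simp [same]
    · simp [same, ← h]

omit [Fintype V] in
theorem Config2.cur_F_fst {G : MG V} (ω : Config2 G) (x y : V) :
    (F ω).1.cur x y = ω.redCur x y + ω.blueCur x y := by
  change #{s | ω.orient s = (x, y)} = _
  simp only [Config2.redCur, Config2.blueCur, card_filter, ← sum_add_distrib]
  refine sum_congr rfl fun s _ => ?_
  cases ω.red s <;> simp

omit [Fintype V] in
theorem Config2.cur_F_snd {G : MG V} (ω : Config2 G) (x y : V) :
    (F ω).2.cur x y = ω.redCur y x + ω.blueCur x y := by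
  simp only [Config.cur, Config2.redCur, Config2.blueCur, card_filter, ← sum_add_distrib]
  refine sum_congr rfl fun s _ => ?_
  cases h : ω.red s <;> simp [F, h, Prod.swap_eq_iff_eq_swap]

omit [DecidableEq V] in
theorem csrc_add (n m : V → V → ℕ) (x : V) :
    csrc (fun x y => n x y + m x y) x = csrc n x + csrc m x := by
  simp only [csrc, ← sum_add_distrib]
  push_cast
  exact sum_congr rfl fun _ _ => by ring

omit [DecidableEq V] in
theorem csrc_flip (n : V → V → ℕ) (x : V) : csrc (fun x y => n y x) x = -csrc n x := by
  simp [csrc]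

theorem Config2.csrc_cur_F_fst {G : MG V} (ω : Config2 G) (x : V) :
    csrc (F ω).1.cur x = csrc ω.redCur x + csrc ω.blueCur x := by
  rw [funext₂ ω.cur_F_fst, csrc_add]

theorem Config2.csrc_cur_F_snd {G : MG V} (ω : Config2 G) (x : V) :
    csrc (F ω).2.cur x = csrc ω.blueCur x - csrc ω.redCur x := by
  rw [funext₂ ω.cur_F_snd, csrc_add, csrc_flip]
  ring

theorem Finv_section_general (G : MG V) (f g : V → ℤ)
    (p : Config G × Config G)
    (h1 : ∀ x, csrc p.1.cur x = f x + g x)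
    (h2 : ∀ x, csrc p.2.cur x = -f x + g x) :
    F (Finv p) = p ∧
    (∀ x, csrc (Finv p).redCur x = f x) ∧
    (∀ x, csrc (Finv p).blueCur x = g x) := by
  have hF := F_Finv p
  have hred_blue (x : V) : csrc (Finv p).redCur x + csrc (Finv p).blueCur x = f x + g x := by
    rw [← Config2.csrc_cur_F_fst, hF, h1]
  have hblue_red (x : V) : csrc (Finv p).blueCur x - csrc (Finv p).redCur x = -f x + g x := by
    rw [← Config2.csrc_cur_F_snd, hF, h2]
  exact ⟨hF, fun x => by linarith [hred_blue x, hblue_red x],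
    fun x => by linarith [hred_blue x, hblue_red x]⟩

/-- Given `(ω_R, ω_B)` with `∂r(ω_R) = f+g` and `∂b(ω_B) = −f+g`, the
configuration `ω̃ = Finv (ω_R, ω_B)` satisfies `F(ω̃) = (ω_R, ω_B)` and has
red source `f` and blue source `g`. -/
theorem Finv_section (G : MG V) (f g : V → ℤ)
    (hf : ∑ v, f v = 0) (hg : ∑ v, g v = 0)
    (p : Config G × Config G)
    (h1 : ∀ x, csrc p.1.cur x = f x + g x)
    (h2 : ∀ x, csrc p.2.cur x = -f x + g x) :
    F (Finv p) = p ∧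
    (∀ x, csrc (Finv p).redCur x = f x) ∧
    (∀ x, csrc (Finv p).blueCur x = g x) :=
  Finv_section_general G f g p h1 h2
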